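/- arXiv:1201.5414 — 2 statements merged into one kernel-verified Lean document; each statement's English description precedes it below -/
import Mathlib

section
/- Let a = [[1,0],[0,0]], b = [[1,1],[1,1]], c = [[1.1,0.5],[0.5,3.6]], d = [[3.6,0.5],[0.5,1.1]] be self-adjoint 2×2 real (or complex Hermitian) matrices. Then a < c, a < d, b < c, b < d in the Loewner order (strictly, i.e., the differences are positive definite), but there exists no self-adjoint 2×2 matrix x with a < x, b < x, x < c, and x < d (all strictly in the Loewner order). -/
/-!
Any `x` with `a, b < x < c, d` has both diagonal entries in `(1, 1.1)`, by comparing diagonals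
with `b`, `c` and `d`. The `2 × 2` minor of `x - b` then gives
`(x₀₁ - 1)² < (x₀₀ - 1)(x₁₁ - 1) < 0.01`, so `x₀₁ > 0.9`, while the minor of `x - a` gives
`x₀₁² < (x₀₀ - 1) x₁₁ < 0.11`, a contradiction.
-/

open Matrix

namespace Matrix

theorem isHermitian_fin_two_of_symm {α : Type*} [Star α] [TrivialStar α] (p q r : α) :
    (!![p, q; q, r] : Matrix (Fin 2) (Fin 2) α).IsHermitian := by
  ext i j
  fin_cases i <;> fin_cases j <;> simp

theorem PosDef.of_fin_two {m : Matrix (Fin 2) (Fin 2) ℝ} (hm : m.IsHermitian)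
    (h₀₀ : 0 < m 0 0) (hdet : 0 < m.det) : m.PosDef := by
  have hsymm : m 1 0 = m 0 1 := by simpa using congrFun₂ hm 0 1
  refine .of_dotProduct_mulVec_pos hm fun x hx => pos_of_mul_pos_right ?_ h₀₀.le
  have key : m 0 0 * (star x ⬝ᵥ (m *ᵥ x)) =
      (m 0 0 * x 0 + m 0 1 * x 1) ^ 2 + m.det * x 1 ^ 2 := by
    simp only [det_fin_two, dotProduct, mulVec, Fin.sum_univ_two, star_trivial, hsymm]
    ring
  rw [key]
  by_cases hx₁ : x 1 = 0
  · have hx₀ : x 0 ≠ 0 := fun hx₀ => hx (funext fun i => by fin_cases i <;> simp [hx₀, hx₁])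
    simp only [hx₁, mul_zero, add_zero, ne_eq, OfNat.ofNat_ne_zero, not_false_eq_true,
      zero_pow]
    positivity
  · positivity

theorem PosDef.mul_self_apply_lt {n : Type*} [Fintype n] {m : Matrix n n ℝ}
    (hm : m.PosDef) {i j : n} (hij : i ≠ j) : m i j * m i j < m i i * m j j := by
  have hsymm : m j i = m i j := by simpa using congrFun₂ hm.isHermitian i j
  have hinj : Function.Injective ![i, j] := by
    intro k l
    fin_cases k <;> fin_cases l <;> simp [hij, hij.symm]
  have hdet := (hm.submatrix hinj).det_pos
  rw [det_fin_two] at hdet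
  simpa [hsymm] using hdet

end Matrix
/-- The self-adjoint `2×2` real matrices fail the (2,2) tight Riesz interpolation
property in the Loewner order: with `a, b, c, d` as below, `a, b < c, d` strictly
(the differences are positive definite), but there is no self-adjoint `x` with
`a, b < x < c, d` strictly. -/
theorem loewner_no_22_interpolation :
    let a : Matrix (Fin 2) (Fin 2) ℝ := !![1, 0; 0, 0]
    let b : Matrix (Fin 2) (Fin 2) ℝ := !![1, 1; 1, 1]
    let c : Matrix (Fin 2) (Fin 2) ℝ := !![1.1, 0.5; 0.5, 3.6]
    let d : Matrix (Fin 2) (Fin 2) ℝ := !![3.6, 0.5; 0.5, 1.1]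
    a.IsHermitian ∧ b.IsHermitian ∧ c.IsHermitian ∧ d.IsHermitian ∧
    (c - a).PosDef ∧ (d - a).PosDef ∧ (c - b).PosDef ∧ (d - b).PosDef ∧
    ¬ ∃ x : Matrix (Fin 2) (Fin 2) ℝ, x.IsHermitian ∧
      (x - a).PosDef ∧ (x - b).PosDef ∧ (c - x).PosDef ∧ (d - x).PosDef := by
  intro a b c d
  have ha : a.IsHermitian := isHermitian_fin_two_of_symm _ _ _
  have hb : b.IsHermitian := isHermitian_fin_two_of_symm _ _ _
  have hc : c.IsHermitian := isHermitian_fin_two_of_symm _ _ _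
  have hd : d.IsHermitian := isHermitian_fin_two_of_symm _ _ _
  refine ⟨ha, hb, hc, hd, ?_, ?_, ?_, ?_, ?_⟩
  · exact .of_fin_two (hc.sub ha) (by norm_num [a, c]) (by norm_num [a, c, det_fin_two])
  · exact .of_fin_two (hd.sub ha) (by norm_num [a, d]) (by norm_num [a, d, det_fin_two])
  · exact .of_fin_two (hc.sub hb) (by norm_num [b, c]) (by norm_num [b, c, det_fin_two])
  · exact .of_fin_two (hd.sub hb) (by norm_num [b, d]) (by norm_num [b, d, det_fin_two])
  rintro ⟨x, -, hxa, hxb, hcx, hdx⟩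
  have hp₁ : 1 < x 0 0 := by simpa [b] using hxb.diag_pos (i := 0)
  have hp₂ : x 0 0 < 1.1 := by simpa [c] using hcx.diag_pos (i := 0)
  have hr₁ : 1 < x 1 1 := by simpa [b] using hxb.diag_pos (i := 1)
  have hr₂ : x 1 1 < 1.1 := by simpa [d] using hdx.diag_pos (i := 1)
  have hq₁ : x 0 1 * x 0 1 < (x 0 0 - 1) * x 1 1 := by
    simpa [a] using hxa.mul_self_apply_lt zero_ne_one
  have hq₂ : (x 0 1 - 1) * (x 0 1 - 1) < (x 0 0 - 1) * (x 1 1 - 1) := by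
    simpa [b] using hxb.mul_self_apply_lt zero_ne_one
  have hq_small : x 0 1 * x 0 1 < 0.11 := by nlinarith
  have hq_near_one : (x 0 1 - 1) * (x 0 1 - 1) < 0.01 := by nlinarith
  nlinarith
end

section
/- The free group F₂ on two generators embeds into the free product Z/2 * Z/3 (there is an injective group homomorphism from the free group on two generators into the free product of the cyclic groups of orders 2 and 3). -/
/-!
In a free product `A ∗ B`, take `a ≠ 1` in `A` and distinct nontrivial `bₙ` in `B`. Acting on
reduced words, the commutator `⁅a, b⁆ = a b a⁻¹ b⁻¹` can cancel at most two letters, so it sends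
every word not beginning with `b a` to one beginning with `a b`, and its inverse `⁅b, a⁆` does the
reverse. By ping-pong the `⁅a, bₙ⁆` freely generate a free subgroup; in `ℤ/2 ∗ ℤ/3` this gives
the free group on `⁅x, y⁆` and `⁅x, y²⁆`.
-/

open scoped commutatorElement

namespace Monoid.CoprodI.Word

variable {ι : Type*} {G : ι → Type*} [∀ i, Group (G i)] [DecidableEq ι] [∀ i, DecidableEq (G i)]

theorem toList_of_smul_of_fstIdx_ne {i : ι} {m : G i} (hm : m ≠ 1) {w : Word G}
    (hw : w.fstIdx ≠ some i) : (of m • w).toList = ⟨i, m⟩ :: w.toList := by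
  rw [← cons_eq_smul (h1 := hw) (h2 := hm)]
  rfl

theorem of_smul_cons {i : ι} (g m : G i) (w : Word G) (h1 : w.fstIdx ≠ some i) (h2 : m ≠ 1) :
    of g • cons m w h1 h2 = of (g * m) • w := by
  rw [cons_eq_smul, map_mul, mul_smul]

theorem fstIdx_of_smul {i : ι} {g : G i} (hg : g ≠ 1) {w : Word G}
    (hw : w.toList.head? ≠ some ⟨i, g⁻¹⟩) : (of g • w).fstIdx = some i := by
  induction w using consRecOn with
  | empty => rw [fstIdx, toList_of_smul_of_fstIdx_ne hg (by simp [fstIdx, empty])]; rfl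
  | cons j m w h1 h2 =>
    by_cases hij : j = i
    · subst hij
      have hgm : g * m ≠ 1 := fun h => hw (by rw [← eq_inv_of_mul_eq_one_right h]; rfl)
      rw [of_smul_cons, fstIdx, toList_of_smul_of_fstIdx_ne hgm h1]
      rfl
    · rw [← cons_eq_smul (h2 := hg)]
      · rfl
      · simpa [fstIdx_cons] using hij

theorem head?_of_smul_ne {j : ι} {d : G j} (hd : d ≠ 1) {w : Word G} {p : Σ i, G i}
    (hp : p.1 ≠ j) (hw : w.toList.take 2 ≠ [⟨j, d⁻¹⟩, p]) :
    (of d • w).toList.head? ≠ some p := by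
  induction w using consRecOn with
  | empty =>
    rw [toList_of_smul_of_fstIdx_ne hd (by simp [fstIdx, empty])]
    rintro ⟨⟩
    exact hp rfl
  | cons i m w h1 h2 =>
    by_cases hij : i = j
    · subst hij
      rw [of_smul_cons]
      by_cases hdm : d * m = 1
      · obtain rfl : m = d⁻¹ := eq_inv_of_mul_eq_one_right hdm
        rw [hdm, map_one, one_smul]
        intro h
        obtain ⟨t, ht⟩ := List.head?_eq_some_iff.mp h
        exact hw (by simp [cons, ht])
      · rw [toList_of_smul_of_fstIdx_ne hdm h1]
        rintro ⟨⟩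
        exact hp rfl
    · rw [toList_of_smul_of_fstIdx_ne hd (by simpa [fstIdx_cons] using hij)]
      rintro ⟨⟩
      exact hp rfl

theorem take_two_of_smul_of_smul {i j : ι} (hij : i ≠ j) {a : G i} (ha : a ≠ 1) {c : G j}
    (hc : c ≠ 1) {w : Word G} (hw : w.fstIdx ≠ some j) :
    (of a • of c • w).toList.take 2 = [⟨i, a⟩, ⟨j, c⟩] := by
  have hcw := toList_of_smul_of_fstIdx_ne hc hw
  rw [toList_of_smul_of_fstIdx_ne ha (by simp [fstIdx, hcw, hij.symm]), hcw]
  rfl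

theorem take_two_commutatorElement_smul {i j : ι} (hij : i ≠ j) {g : G i} (hg : g ≠ 1)
    {k : G j} (hk : k ≠ 1) {w : Word G} (hw : w.toList.take 2 ≠ [⟨j, k⟩, ⟨i, g⟩]) :
    (⁅of g, of k⁆ • w).toList.take 2 = [⟨i, g⟩, ⟨j, k⟩] := by
  have hw' : (of k⁻¹ • w).toList.head? ≠ some ⟨i, g⁻¹⁻¹⟩ := by
    rw [inv_inv]
    exact head?_of_smul_ne (inv_ne_one.mpr hk) hij (by rwa [inv_inv])
  rw [commutatorElement_def, ← map_inv, ← map_inv, mul_smul, mul_smul, mul_smul]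
  exact take_two_of_smul_of_smul hij hg hk
    (by rw [fstIdx_of_smul (inv_ne_one.mpr hg) hw']; simpa using hij)

end Monoid.CoprodI.Word

namespace Monoid.CoprodI

open Word

universe u v

variable {ι : Type u} {G : ι → Type v} [∀ i, Group (G i)]

theorem injective_lift_commutatorElement {ν : Type max u v} [Nontrivial ν] {i j : ι}
    (hij : i ≠ j) {g : G i} (hg : g ≠ 1) {k : ν → G j} (hk : Function.Injective k)
    (hk1 : ∀ n, k n ≠ 1) :
    Function.Injective (FreeGroup.lift fun n => ⁅of g, of (k n)⁆ : FreeGroup ν →* CoprodI G) := by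
  classical
  let X (n : ν) : Set (Word G) := {w | w.toList.take 2 = [⟨i, g⟩, ⟨j, k n⟩]}
  let Y (n : ν) : Set (Word G) := {w | w.toList.take 2 = [⟨j, k n⟩, ⟨i, g⟩]}
  apply FreeGroup.injective_lift_of_ping_pong _ X Y
  · exact fun n =>
      ⟨_, take_two_of_smul_of_smul hij hg (hk1 n) (w := empty) (by simp [fstIdx, empty])⟩
  · exact fun m n hmn => Set.disjoint_left.mpr fun w (hm : _ = _) (hn : _ = _) =>
      hmn (hk (by simpa using hm.symm.trans hn))
  · exact fun m n hmn => Set.disjoint_left.mpr fun w (hm : _ = _) (hn : _ = _) =>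
      hmn (hk (by simpa using hm.symm.trans hn))
  · exact fun m n => Set.disjoint_left.mpr fun w (hm : _ = _) (hn : _ = _) =>
      hij (congrArg Sigma.fst (List.cons.inj (hm.symm.trans hn)).1)
  · rintro n _ ⟨w, hw, rfl⟩
    exact take_two_commutatorElement_smul hij hg (hk1 n) hw
  · rintro n _ ⟨w, hw, rfl⟩
    rw [Pi.inv_apply, commutatorElement_inv]
    exact take_two_commutatorElement_smul hij.symm (hk1 n) hg hw

end Monoid.CoprodI

namespace Monoid.Coprod

universe u

theorem injective_lift_commutatorElement {M N : Type u} [Group M] [Group N] {ν : Type u}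
    [Nontrivial ν] {x : M} (hx : x ≠ 1) {y : ν → N} (hy : Function.Injective y)
    (hy1 : ∀ n, y n ≠ 1) :
    Function.Injective
      (FreeGroup.lift fun n => ⁅(inl x : Coprod M N), inr (y n)⁆ : FreeGroup ν →* Coprod M N) := by
  let G (b : Bool) : Type u := cond b M N
  let _ : ∀ b, Group (G b) := fun b => match b with
    | true => ‹Group M›
    | false => ‹Group N›
  -- Reduced words are only available for the indexed free product, so we map there.
  let ψ : Coprod M N →* CoprodI G :=
    lift (CoprodI.of (M := G) (i := true)) (CoprodI.of (M := G) (i := false))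
  have hψ : ψ.comp (FreeGroup.lift fun n => ⁅(inl x : Coprod M N), inr (y n)⁆) =
      FreeGroup.lift fun n =>
        ⁅CoprodI.of (M := G) (i := true) x, CoprodI.of (M := G) (i := false) (y n)⁆ :=
    FreeGroup.ext_hom _ _ fun n => by simp [ψ, map_commutatorElement]
  refine Function.Injective.of_comp (f := ψ) ?_
  rw [← MonoidHom.coe_comp, hψ]
  exact CoprodI.injective_lift_commutatorElement (by decide) hx hy hy1

end Monoid.Coprod

/-- The free group on two generators embeds into the free product
`ℤ/2 ∗ ℤ/3`. -/
theorem freeGroup_two_embeds_in_Z2_free_Z3 :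
    ∃ φ : FreeGroup (Fin 2) →*
        Monoid.Coprod (Multiplicative (ZMod 2)) (Multiplicative (ZMod 3)),
      Function.Injective φ :=
  ⟨_, Monoid.Coprod.injective_lift_commutatorElement (x := .ofAdd 1) (by decide)
    (y := ![.ofAdd 1, .ofAdd 2]) (by decide) (by decide)⟩
end
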